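/- Let F be a finite field with an ergodic measure preserving action of the affine group A_F on a probability space (Ω,B,μ). If B, C ∈ B satisfy μ(B)μ(C) > 6/|F*|, then there exists u ∈ F* with μ(B ∩ M_u A_{-u} C) > 0. Moreover, the averaged bound (1/|F*|) Σ_{u∈F*} μ(B ∩ M_u A_{-u} C) ≥ μ(B)μ(C) - √(6μ(B)μ(C)/|F*|) holds. -/

import Mathlib

/-!
Write `T_u = M_u A_{-u}` and `G(x) = #{u ∈ F* : x ∈ T_u C}`, so that `∑_u μ(B ∩ T_u C) = ∫_B G`
and `∫ G = |F*| μ(C)`. By Cauchy–Schwarz, `|F*| μ(B) μ(C) - ∫_B G ≤ √(μ(B) Var G)`.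

In `∫ G² = ∑_{u,r} μ(T_u C ∩ T_{ur} C)` the term of `(u, r)` equals `μ(h⁻¹ C ∩ C)` for the
affine map `h x = r x + u (1 - r²)`. For `r ≠ ±1` the map `u ↦ u (1 - r²)` is injective, so these
terms are dominated by `∑_{h ∈ A_F} μ(h⁻¹ C ∩ C)`, which ergodicity evaluates to `|A_F| μ(C)²`:
the function `∑_h 1_C ∘ h` is `A_F`-invariant, hence a.e. constant. The two values `r = ±1`
contribute at most `2 |F*| μ(C)`. Hence `Var G ≤ 3 |F*| μ(C)`, which gives the averaged bound
with `3` in place of `6`.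
-/

open MeasureTheory ProbabilityTheory Finset
open scoped ENNReal

structure AffineAction (F : Type*) [Field F] {Ω : Type*} [MeasurableSpace Ω]
    (μ : Measure Ω) where
  TA : F → Ω → Ω
  TM : F → Ω → Ω
  TA_zero : TA 0 = id
  TA_add : ∀ u v : F, TA (u + v) = TA u ∘ TA v
  TM_one : TM 1 = id
  TM_mul : ∀ u v : F, u ≠ 0 → v ≠ 0 → TM (u * v) = TM u ∘ TM v
  comm : ∀ u v : F, u ≠ 0 → TM u ∘ TA v = TA (u * v) ∘ TM u
  TA_mp : ∀ u : F, MeasurePreserving (TA u) μ μ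
  TM_mp : ∀ u : F, u ≠ 0 → MeasurePreserving (TM u) μ μ

namespace MeasureTheory

variable {Ω : Type*} [MeasurableSpace Ω] {μ : Measure Ω}

lemma integral_sum_indicator_one {ι : Type*} [IsFiniteMeasure μ] (t : Finset ι)
    {s : ι → Set Ω} (hs : ∀ i ∈ t, MeasurableSet (s i)) :
    ∫ x, ∑ i ∈ t, (s i).indicator (1 : Ω → ℝ) x ∂μ = ∑ i ∈ t, μ.real (s i) := by
  rw [integral_finsetSum t fun i hi => (integrable_indicator_iff (hs i hi)).mpr
    (integrableOn_const (by finiteness))]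
  exact sum_congr rfl fun i hi => integral_indicator_one (hs i hi)

lemma integral_sum_sum_indicator_one {ι κ : Type*} [IsFiniteMeasure μ] (t : Finset ι)
    (t' : Finset κ) {s : ι → κ → Set Ω}
    (hs : ∀ i ∈ t, ∀ j ∈ t', MeasurableSet (s i j)) :
    ∫ x, ∑ i ∈ t, ∑ j ∈ t', (s i j).indicator (1 : Ω → ℝ) x ∂μ =
      ∑ i ∈ t, ∑ j ∈ t', μ.real (s i j) := by
  simp_rw [← sum_product']
  exact integral_sum_indicator_one _ fun p hp => hs _ (mem_product.1 hp).1 _ (mem_product.1 hp).2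

lemma sq_integral_le_measureReal_univ_mul_integral_sq [IsFiniteMeasure μ] {f : Ω → ℝ}
    (hf : Integrable f μ) (hf2 : Integrable (fun x => f x ^ 2) μ) :
    (∫ x, f x ∂μ) ^ 2 ≤ μ.real Set.univ * ∫ x, f x ^ 2 ∂μ := by
  have hquad : ∀ t : ℝ, 0 ≤ μ.real Set.univ * (t * t) + (-2 * ∫ x, f x ∂μ) * t +
      ∫ x, f x ^ 2 ∂μ := by
    intro t
    have hexpand : ∫ x, (t - f x) ^ 2 ∂μ =
        μ.real Set.univ * (t * t) + (-2 * ∫ x, f x ∂μ) * t + ∫ x, f x ^ 2 ∂μ := by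
      simp_rw [sub_sq]
      rw [integral_add (by fun_prop) hf2, integral_sub (by fun_prop) (by fun_prop),
        integral_const, integral_const_mul, smul_eq_mul]
      ring
    exact hexpand ▸ integral_nonneg fun x => sq_nonneg _
  have := discrim_le_zero hquad
  rw [discrim] at this
  linarith

lemma sq_measureReal_mul_integral_sub_setIntegral_le [IsProbabilityMeasure μ] {G : Ω → ℝ}
    (hG : MemLp G 2 μ) (s : Set Ω) :
    (μ.real s * μ[G] - ∫ x in s, G x ∂μ) ^ 2 ≤ μ.real s * Var[G; μ] := by
  have hGi : Integrable G μ := hG.integrable one_le_two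
  have hsq : Integrable (fun x => (μ[G] - G x) ^ 2) μ :=
    ((memLp_const μ[G]).sub hG).integrable_sq
  have hcs := sq_integral_le_measureReal_univ_mul_integral_sq (μ := μ.restrict s)
    (f := fun x => μ[G] - G x) ((integrable_const μ[G]).sub hGi).restrict hsq.restrict
  rw [integral_sub (integrable_const _) hGi.restrict, setIntegral_const, smul_eq_mul,
    measureReal_restrict_apply_univ] at hcs
  refine hcs.trans (mul_le_mul_of_nonneg_left ?_ measureReal_nonneg)
  rw [variance_eq_integral hGi.aemeasurable]
  simp_rw [sub_sq_comm (G _)]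
  exact setIntegral_le_integral hsq (.of_forall fun x => sq_nonneg _)

end MeasureTheory

lemma Fintype.card_sub_one_pos {α : Type*} [Fintype α] [Nontrivial α] :
    (0 : ℝ) < Fintype.card α - 1 :=
  sub_pos.mpr (by exact_mod_cast Fintype.one_lt_card)

lemma Finset.sum_sum_mul_one_sub_mul_self_le {F : Type*} [Field F] [Fintype F] [DecidableEq F]
    (s t : Finset F) {m : ℝ} (φ : F → F → ℝ) (hφ0 : ∀ w r, 0 ≤ φ w r)
    (hφm : ∀ w r, φ w r ≤ m) :
    ∑ r ∈ t, ∑ u ∈ s, φ (u * (1 - r * r)) r ≤ 2 * #s * m + ∑ r ∈ t, ∑ w, φ w r := by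
  have hr : ∀ r ∈ t, ∑ u ∈ s, φ (u * (1 - r * r)) r ≤
      (if r * r = 1 then #s * m else 0) + ∑ w, φ w r := by
    intro r _
    split_ifs with h
    · have hle : ∑ u ∈ s, φ (u * (1 - r * r)) r ≤ #s * m := by
        simpa [h] using mul_le_mul_of_nonneg_left (hφm 0 r) (Nat.cast_nonneg #s)
      linarith [sum_nonneg fun w (_ : w ∈ univ) => hφ0 w r]
    · have hinj : Set.InjOn (· * (1 - r * r)) s := fun a _ b _ hab =>
        mul_right_cancel₀ (sub_ne_zero.mpr (Ne.symm h)) hab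
      rw [zero_add, ← sum_image (f := (φ · r)) hinj]
      exact sum_le_univ_sum_of_nonneg fun w => hφ0 w r
  have hcard : #{r ∈ t | r * r = 1} ≤ 2 :=
    (card_le_card (t := {1, -1}) fun r hr => by
      rcases mul_self_eq_one_iff.mp (mem_filter.mp hr).2 with h | h <;> simp [h]).trans
      card_le_two
  calc ∑ r ∈ t, ∑ u ∈ s, φ (u * (1 - r * r)) r
      ≤ ∑ r ∈ t, ((if r * r = 1 then #s * m else 0) + ∑ w, φ w r) := sum_le_sum hr
    _ = #{r ∈ t | r * r = 1} * (#s * m) + ∑ r ∈ t, ∑ w, φ w r := by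
      rw [sum_add_distrib, ← sum_filter, sum_const, nsmul_eq_mul]
    _ ≤ 2 * #s * m + ∑ r ∈ t, ∑ w, φ w r := by
      rw [mul_assoc 2]
      gcongr
      · exact mul_nonneg (Nat.cast_nonneg _) ((hφ0 0 0).trans (hφm 0 0))
      · exact_mod_cast hcard

namespace AffineAction

variable {F : Type*} [Field F] {Ω : Type*} [MeasurableSpace Ω] {μ : Measure Ω}
  (act : AffineAction F μ)

/-- The action of the affine map `x ↦ r * x + w`. -/
def aff (w r : F) : Ω → Ω := act.TA w ∘ act.TM r

lemma TA_eq_aff (t : F) : act.TA t = act.aff t 1 := by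
  rw [aff, act.TM_one, Function.comp_id]

lemma TM_eq_aff (s : F) : act.TM s = act.aff 0 s := by
  rw [aff, act.TA_zero, Function.id_comp]

lemma aff_zero_one : act.aff 0 1 = id := by
  rw [← TA_eq_aff, act.TA_zero]

lemma aff_comp_aff {r s : F} (hr : r ≠ 0) (hs : s ≠ 0) (w t : F) :
    act.aff w r ∘ act.aff t s = act.aff (w + r * t) (r * s) := by
  ext x
  simp only [aff, act.TA_add, act.TM_mul r s hr hs, Function.comp_apply]
  exact congrArg (act.TA w) (congrFun (act.comm r t hr) (act.TM s x))

lemma aff_apply_aff {r s : F} (hr : r ≠ 0) (hs : s ≠ 0) (w t : F) (x : Ω) :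
    act.aff w r (act.aff t s x) = act.aff (w + r * t) (r * s) x :=
  congrFun (act.aff_comp_aff hr hs w t) x

lemma measurePreserving_aff (w : F) {r : F} (hr : r ≠ 0) :
    MeasurePreserving (act.aff w r) μ μ :=
  (act.TA_mp w).comp (act.TM_mp r hr)

lemma measurableSet_preimage_aff (w : F) {r : F} (hr : r ≠ 0) {C : Set Ω}
    (hC : MeasurableSet C) : MeasurableSet (act.aff w r ⁻¹' C) :=
  (act.measurePreserving_aff w hr).measurable hC

lemma measureReal_preimage_aff (w : F) {r : F} (hr : r ≠ 0) {C : Set Ω}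
    (hC : MeasurableSet C) : μ.real (act.aff w r ⁻¹' C) = μ.real C :=
  (act.measurePreserving_aff w hr).measureReal_preimage hC.nullMeasurableSet

/-- `M_u A_{-u}` is `x ↦ u * x - u ^ 2`, whose inverse is `x ↦ u⁻¹ * x + u`. -/
lemma image_TM_comp_TA_neg {u : F} (hu : u ≠ 0) (s : Set Ω) :
    (act.TM u ∘ act.TA (-u)) '' s = act.aff u u⁻¹ ⁻¹' s := by
  have hT : act.TM u ∘ act.TA (-u) = act.aff (-(u * u)) u := by
    rw [act.comm u (-u) hu, aff, mul_neg]
  refine congrFun (Set.image_eq_preimage_of_inverse (fun x => ?_) (fun x => ?_)) s <;>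
    simp only [hT, act.aff_apply_aff (inv_ne_zero hu) hu, act.aff_apply_aff hu (inv_ne_zero hu)]
  · rw [inv_mul_cancel₀ hu, mul_neg, inv_mul_cancel_left₀ hu, add_neg_cancel, aff_zero_one, id]
  · rw [mul_inv_cancel₀ hu, neg_add_cancel, aff_zero_one, id]

lemma measureReal_preimage_aff_inter_preimage_aff {u r : F} (hu : u ≠ 0) (hr : r ≠ 0)
    {C : Set Ω} (hC : MeasurableSet C) :
    μ.real (act.aff u u⁻¹ ⁻¹' C ∩ act.aff (u * r) (u * r)⁻¹ ⁻¹' C) =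
      μ.real (act.aff (u * (1 - r * r)) r ⁻¹' C ∩ C) := by
  have hur : u * r ≠ 0 := mul_ne_zero hu hr
  have h : act.aff u u⁻¹ = act.aff (u * (1 - r * r)) r ∘ act.aff (u * r) (u * r)⁻¹ := by
    rw [act.aff_comp_aff hr (inv_ne_zero hur)]
    congr 1
    · field_simp
      ring
    · field_simp
  rw [h, Set.preimage_comp, ← Set.preimage_inter, act.measureReal_preimage_aff _ (inv_ne_zero hur)
    ((act.measurableSet_preimage_aff _ hr hC).inter hC)]

def IsErgodic : Prop :=
  ∀ S : Set Ω, MeasurableSet S → (∀ u : F, act.TA u ⁻¹' S = S) →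
    (∀ u : F, u ≠ 0 → act.TM u ⁻¹' S = S) → μ S = 0 ∨ μ S = 1

section Finite

variable [Fintype F] [DecidableEq F]

/-- The number of `u ∈ F*` with `x ∈ M_u A_{-u} C`. -/
noncomputable def imageCount (C : Set Ω) (x : Ω) : ℝ :=
  ∑ u ∈ univ.erase 0, (act.aff u u⁻¹ ⁻¹' C).indicator 1 x

variable [IsFiniteMeasure μ] {C : Set Ω}

lemma memLp_imageCount (hC : MeasurableSet C) (p : ℝ≥0∞) : MemLp (act.imageCount C) p μ :=
  memLp_finsetSum _ fun u hu => memLp_indicator_const p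
    (act.measurableSet_preimage_aff u (inv_ne_zero (ne_of_mem_erase hu)) hC) 1
    (.inr (measure_ne_top μ _))

lemma integral_imageCount (hC : MeasurableSet C) :
    μ[act.imageCount C] = (Fintype.card F - 1) * μ.real C := by
  unfold imageCount
  rw [integral_sum_indicator_one _ fun u hu =>
      act.measurableSet_preimage_aff u (inv_ne_zero (ne_of_mem_erase hu)) hC,
    sum_congr rfl fun u hu => act.measureReal_preimage_aff u (inv_ne_zero (ne_of_mem_erase hu)) hC,
    sum_const, nsmul_eq_mul, cast_card_erase_of_mem (mem_univ 0), card_univ]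

lemma setIntegral_imageCount (hC : MeasurableSet C) (B : Set Ω) :
    ∫ x in B, act.imageCount C x ∂μ = ∑ u ∈ univ.erase 0, μ.real (B ∩ act.aff u u⁻¹ ⁻¹' C) := by
  have hmeas u (hu : u ∈ univ.erase (0 : F)) : MeasurableSet (act.aff u u⁻¹ ⁻¹' C) :=
    act.measurableSet_preimage_aff u (inv_ne_zero (ne_of_mem_erase hu)) hC
  unfold imageCount
  rw [integral_sum_indicator_one _ hmeas]
  exact sum_congr rfl fun u hu => by rw [measureReal_restrict_apply (hmeas u hu), Set.inter_comm]

lemma integral_imageCount_sq (hC : MeasurableSet C) :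
    μ[act.imageCount C ^ 2] = ∑ u ∈ univ.erase 0, ∑ v ∈ univ.erase 0,
      μ.real (act.aff u u⁻¹ ⁻¹' C ∩ act.aff v v⁻¹ ⁻¹' C) := by
  have hmeas u (hu : u ∈ univ.erase (0 : F)) : MeasurableSet (act.aff u u⁻¹ ⁻¹' C) :=
    act.measurableSet_preimage_aff u (inv_ne_zero (ne_of_mem_erase hu)) hC
  rw [← integral_sum_sum_indicator_one _ _ fun u hu v hv => (hmeas u hu).inter (hmeas v hv)]
  simp only [imageCount, Pi.pow_apply, sq, sum_mul_sum, Set.inter_indicator_one, Pi.mul_apply]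

end Finite

variable {act}

lemma IsErgodic.ae_eq_const [IsProbabilityMeasure μ] (herg : act.IsErgodic) {X : Type*}
    [MeasurableSpace X] [Nonempty X] [MeasurableSpace.CountablySeparated X] {g : Ω → X}
    (hg : Measurable g) (hTA : ∀ t, g ∘ act.TA t = g)
    (hTM : ∀ s, s ≠ 0 → g ∘ act.TM s = g) :
    ∃ c, g =ᵐ[μ] Function.const Ω c := by
  refine Filter.exists_eventuallyEq_const_of_forall_separating MeasurableSet fun U hU => ?_
  rcases herg (g ⁻¹' U) (hg hU) (fun t => by rw [← Set.preimage_comp, hTA])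
    (fun s hs => by rw [← Set.preimage_comp, hTM s hs]) with h | h
  · exact Or.inr (measure_eq_zero_iff_ae_notMem.mp h)
  · exact Or.inl ((ae_mem_iff_measure_eq (hg hU).nullMeasurableSet).mpr
      (by rw [h, measure_univ]))

section Finite

variable [Fintype F] [DecidableEq F] [IsProbabilityMeasure μ] {C : Set Ω}

lemma IsErgodic.sum_sum_measureReal_preimage_aff_inter (herg : act.IsErgodic)
    (hC : MeasurableSet C) :
    ∑ r ∈ univ.erase 0, ∑ w, μ.real (act.aff w r ⁻¹' C ∩ C) =
      Fintype.card F * (Fintype.card F - 1) * μ.real C ^ 2 := by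
  have hmeas : ∀ r ∈ univ.erase (0 : F), ∀ w ∈ univ, MeasurableSet (act.aff w r ⁻¹' C) :=
    fun r hr w _ => act.measurableSet_preimage_aff w (ne_of_mem_erase hr) hC
  set H : Ω → ℝ := fun x => ∑ r ∈ univ.erase 0, ∑ w, C.indicator 1 (act.aff w r x)
  have hH_TA : ∀ t, H ∘ act.TA t = H := by
    intro t
    ext x
    rw [act.TA_eq_aff]
    refine sum_congr rfl fun r hr => ?_
    simp only [act.aff_apply_aff (ne_of_mem_erase hr) one_ne_zero, mul_one]
    exact Fintype.sum_equiv (Equiv.addRight (r * t)) _ _ fun w => rfl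
  have hH_TM : ∀ s, s ≠ 0 → H ∘ act.TM s = H := by
    intro s hs
    ext x
    rw [act.TM_eq_aff]
    refine sum_nbij' (· * s) (· * s⁻¹) (by simp [hs]) (by simp [hs]) (by simp [hs])
      (by simp [hs]) fun r hr => ?_
    simp only [act.aff_apply_aff (ne_of_mem_erase hr) hs, mul_zero, add_zero]
  have hH : Measurable H := Finset.measurable_sum _ fun r hr => Finset.measurable_sum _
    fun w hw => measurable_const.indicator (hmeas r hr w hw)
  obtain ⟨c, hc⟩ := herg.ae_eq_const hH hH_TA hH_TM
  have hc_eq : c = Fintype.card F * (Fintype.card F - 1) * μ.real C := by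
    calc c = ∫ x, H x ∂μ := by simp [integral_congr_ae hc]
      _ = ∑ r ∈ univ.erase 0, ∑ w, μ.real (act.aff w r ⁻¹' C) :=
        integral_sum_sum_indicator_one _ _ hmeas
      _ = _ := by
        rw [sum_congr rfl fun r hr => sum_congr rfl fun w _ =>
          act.measureReal_preimage_aff w (ne_of_mem_erase hr) hC]
        simp [Nat.cast_pred Fintype.card_pos]
        ring
  calc ∑ r ∈ univ.erase 0, ∑ w, μ.real (act.aff w r ⁻¹' C ∩ C)
      = ∫ x, H x * C.indicator 1 x ∂μ := by
        rw [← integral_sum_sum_indicator_one _ _ fun r hr w hw => (hmeas r hr w hw).inter hC]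
        congr 1 with x
        simp only [H, sum_mul, Set.inter_indicator_one]
        rfl
    _ = ∫ x, c * C.indicator 1 x ∂μ := integral_congr_ae (hc.mul .rfl)
    _ = _ := by rw [integral_const_mul, integral_indicator_one hC, hc_eq]; ring

lemma IsErgodic.sum_sum_measureReal_preimage_inter_le (herg : act.IsErgodic)
    (hC : MeasurableSet C) :
    ∑ u ∈ univ.erase 0, ∑ v ∈ univ.erase 0,
        μ.real (act.aff u u⁻¹ ⁻¹' C ∩ act.aff v v⁻¹ ⁻¹' C) ≤
      2 * (Fintype.card F - 1) * μ.real C +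
        Fintype.card F * (Fintype.card F - 1) * μ.real C ^ 2 := by
  set φ : F → F → ℝ := fun w r => μ.real (act.aff w r ⁻¹' C ∩ C)
  calc ∑ u ∈ univ.erase 0, ∑ v ∈ univ.erase 0,
        μ.real (act.aff u u⁻¹ ⁻¹' C ∩ act.aff v v⁻¹ ⁻¹' C)
      = ∑ u ∈ univ.erase 0, ∑ r ∈ univ.erase 0, φ (u * (1 - r * r)) r := by
        refine sum_congr rfl fun u hu => ?_
        have hu0 := ne_of_mem_erase hu
        refine (sum_nbij' (u * ·) (u⁻¹ * ·) (by simp [hu0]) (by simp [hu0]) (by simp [hu0])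
          (by simp [hu0]) fun r hr => ?_).symm
        exact (act.measureReal_preimage_aff_inter_preimage_aff hu0 (ne_of_mem_erase hr) hC).symm
    _ = ∑ r ∈ univ.erase 0, ∑ u ∈ univ.erase 0, φ (u * (1 - r * r)) r := sum_comm
    _ ≤ 2 * #(univ.erase (0 : F)) * μ.real C + ∑ r ∈ univ.erase 0, ∑ w, φ w r :=
        sum_sum_mul_one_sub_mul_self_le _ _ φ (fun _ _ => measureReal_nonneg)
          fun _ _ => measureReal_mono Set.inter_subset_right
    _ = _ := by
        rw [herg.sum_sum_measureReal_preimage_aff_inter hC,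
          cast_card_erase_of_mem (mem_univ 0), card_univ]

lemma IsErgodic.variance_imageCount_le (herg : act.IsErgodic) (hC : MeasurableSet C) :
    Var[act.imageCount C; μ] ≤ 3 * (Fintype.card F - 1) * μ.real C := by
  have hmoment := herg.sum_sum_measureReal_preimage_inter_le hC
  have hN := Fintype.card_sub_one_pos (α := F)
  have hm0 : 0 ≤ μ.real C := measureReal_nonneg
  have hm1 : μ.real C ≤ 1 := measureReal_le_one
  rw [variance_eq_sub (act.memLp_imageCount hC 2), act.integral_imageCount_sq hC,
    act.integral_imageCount hC]
  nlinarith [mul_nonneg hN.le (mul_nonneg hm0 (sub_nonneg.mpr hm1))]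

lemma IsErgodic.sub_sqrt_le_average_measureReal_inter (herg : act.IsErgodic) (B : Set Ω)
    (hC : MeasurableSet C) :
    μ.real B * μ.real C - √(3 * (μ.real B * μ.real C) / (Fintype.card F - 1)) ≤
      (Fintype.card F - 1 : ℝ)⁻¹ *
        ∑ u ∈ univ.erase 0, μ.real (B ∩ act.aff u u⁻¹ ⁻¹' C) := by
  have hcs := sq_measureReal_mul_integral_sub_setIntegral_le (act.memLp_imageCount hC 2) B
  rw [act.integral_imageCount hC, act.setIntegral_imageCount hC] at hcs
  have hvar := herg.variance_imageCount_le hC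
  have hN := Fintype.card_sub_one_pos (α := F)
  set N : ℝ := Fintype.card F - 1
  set S := ∑ u ∈ univ.erase 0, μ.real (B ∩ act.aff u u⁻¹ ⁻¹' C)
  set b := μ.real B
  set m := μ.real C
  have hsq : (b * m - N⁻¹ * S) ^ 2 ≤ 3 * (b * m) / N := by
    have hb0 : 0 ≤ b := measureReal_nonneg
    calc (b * m - N⁻¹ * S) ^ 2 = (b * (N * m) - S) ^ 2 / N ^ 2 := by field_simp
      _ ≤ b * (3 * N * m) / N ^ 2 := by gcongr; exact hcs.trans (by gcongr)
      _ = 3 * (b * m) / N := by field_simp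
  linarith [le_abs_self (b * m - N⁻¹ * S), Real.abs_le_sqrt hsq]

end Finite

end AffineAction

theorem finite_field_ergodic_recurrence_general {F : Type*} [Field F] [Fintype F] [DecidableEq F]
    {Ω : Type*} [MeasurableSpace Ω] {μ : Measure Ω} [IsProbabilityMeasure μ]
    (act : AffineAction F μ)
    (herg : ∀ S : Set Ω, MeasurableSet S → (∀ u : F, act.TA u ⁻¹' S = S) →
      (∀ u : F, u ≠ 0 → act.TM u ⁻¹' S = S) → μ S = 0 ∨ μ S = 1)
    (B C : Set Ω) (hC : MeasurableSet C) :
    ((6 : ℝ) / (Fintype.card F - 1) < (μ B).toReal * (μ C).toReal →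
      ∃ u : F, u ≠ 0 ∧ 0 < μ (B ∩ (act.TM u ∘ act.TA (-u)) '' C)) ∧
    (μ B).toReal * (μ C).toReal -
        Real.sqrt (6 * ((μ B).toReal * (μ C).toReal) / (Fintype.card F - 1)) ≤
      ((Fintype.card F - 1 : ℝ))⁻¹ *
        ∑ u ∈ Finset.univ.erase (0 : F), (μ (B ∩ (act.TM u ∘ act.TA (-u)) '' C)).toReal := by
  have hT : ∀ u ∈ univ.erase (0 : F), μ.real (B ∩ (act.TM u ∘ act.TA (-u)) '' C) =
      μ.real (B ∩ act.aff u u⁻¹ ⁻¹' C) := fun u hu => by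
    rw [act.image_TM_comp_TA_neg (ne_of_mem_erase hu)]
  simp only [← measureReal_def, sum_congr rfl hT]
  have hmain := AffineAction.IsErgodic.sub_sqrt_le_average_measureReal_inter herg B hC
  set x := μ.real B * μ.real C
  set N : ℝ := Fintype.card F - 1
  set S := ∑ u ∈ univ.erase 0, μ.real (B ∩ act.aff u u⁻¹ ⁻¹' C)
  have hN := Fintype.card_sub_one_pos (α := F)
  refine ⟨fun h6 => ?_, hmain.trans' (by gcongr; norm_num)⟩
  have hx : 0 < x := (div_pos (by norm_num) hN).trans h6
  have hsqrt : √(3 * x / N) < x := by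
    rw [Real.sqrt_lt' hx, div_lt_iff₀ hN]
    rw [div_lt_iff₀ hN] at h6
    nlinarith [mul_lt_mul_of_pos_left h6 hx]
  have hS : ∑ _u ∈ univ.erase (0 : F), (0 : ℝ) < S := by
    rw [sum_const_zero]
    exact pos_of_mul_pos_right ((sub_pos.mpr hsqrt).trans_le hmain) (inv_nonneg.mpr hN.le)
  obtain ⟨u, hu, hpos⟩ := exists_lt_of_sum_lt hS
  refine ⟨u, ne_of_mem_erase hu, ?_⟩
  rw [act.image_TM_comp_TA_neg (ne_of_mem_erase hu)]
  exact (ENNReal.toReal_pos_iff.mp hpos).1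

/-- Ergodic finite field recurrence: if the affine group of a finite field `F` acts
ergodically on a probability space and `μ(B)μ(C) > 6/|F*|`, then
`μ(B ∩ M_u A_{-u} C) > 0` for some `u ∈ F*`; moreover the averaged bound
`(1/|F*|) ∑_{u ∈ F*} μ(B ∩ M_u A_{-u} C) ≥ μ(B)μ(C) - √(6 μ(B)μ(C)/|F*|)` holds. -/
theorem finite_field_ergodic_recurrence {F : Type*} [Field F] [Fintype F] [DecidableEq F]
    {Ω : Type*} [MeasurableSpace Ω] {μ : Measure Ω} [IsProbabilityMeasure μ]
    (act : AffineAction F μ)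
    (herg : ∀ S : Set Ω, MeasurableSet S → (∀ u : F, act.TA u ⁻¹' S = S) →
      (∀ u : F, u ≠ 0 → act.TM u ⁻¹' S = S) → μ S = 0 ∨ μ S = 1)
    (B C : Set Ω) (hB : MeasurableSet B) (hC : MeasurableSet C) :
    ((6 : ℝ) / (Fintype.card F - 1) < (μ B).toReal * (μ C).toReal →
      ∃ u : F, u ≠ 0 ∧ 0 < μ (B ∩ (act.TM u ∘ act.TA (-u)) '' C)) ∧
    (μ B).toReal * (μ C).toReal -
        Real.sqrt (6 * ((μ B).toReal * (μ C).toReal) / (Fintype.card F - 1)) ≤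
      ((Fintype.card F - 1 : ℝ))⁻¹ *
        ∑ u ∈ Finset.univ.erase (0 : F), (μ (B ∩ (act.TM u ∘ act.TA (-u)) '' C)).toReal :=
  finite_field_ergodic_recurrence_general act herg B C hC
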